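/- For all positive integers m and all nonnegative integers n, the number of forests of m colored 5-ary trees of total weight n equals \sum_{p=0}^{\lfloor n/4 \rfloor} (m/(5p+m)) \binom{5p+m}{p} \binom{n+p+m-1}{n-4p}. -/

import Mathlib

/-- A complete 5-ary tree: every internal vertex has exactly 5 (ordered) children. -/
inductive FiveTree : Type
  | leaf : FiveTree
  | node : FiveTree → FiveTree → FiveTree → FiveTree → FiveTree → FiveTree

namespace FiveTree

/-- The number of internal vertices of a complete 5-ary tree. -/
def internals : FiveTree → ℕ
  | leaf => 0
  | node a b c d e =>
      internals a + internals b + internals c + internals d + internals e + 1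

/-- The subtree rooted at the vertex reached from the root by the given path of child
indices; `none` if there is no such vertex. -/
def subtreeAt : FiveTree → List (Fin 5) → Option FiveTree
  | t, [] => some t
  | leaf, _ :: _ => none
  | node a _ _ _ _, ⟨0, _⟩ :: p => subtreeAt a p
  | node _ b _ _ _, ⟨1, _⟩ :: p => subtreeAt b p
  | node _ _ c _ _, ⟨2, _⟩ :: p => subtreeAt c p
  | node _ _ _ d _, ⟨3, _⟩ :: p => subtreeAt d p
  | node _ _ _ _ e, ⟨_ + 4, _⟩ :: p => subtreeAt e p

/-- The list of (the paths from the root to) all vertices of a complete 5-ary tree. -/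
def vertices : FiveTree → List (List (Fin 5))
  | leaf => [[]]
  | node a b c d e =>
      [] :: ((vertices a).map (List.cons 0) ++ (vertices b).map (List.cons 1) ++
        (vertices c).map (List.cons 2) ++ (vertices d).map (List.cons 3) ++
        (vertices e).map (List.cons 4))

end FiveTree

/-- A colored 5-ary tree: a complete 5-ary tree in which every vertex (internal or leaf)
is assigned a nonnegative integer color (non-vertex paths carry the junk color `0`). -/
structure ColoredFiveTree : Type where
  /-- the underlying complete 5-ary tree -/
  tree : FiveTree
  /-- the color of each vertex (indexed by the path from the root) -/
  color : List (Fin 5) → ℕ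
  color_eq_zero : ∀ p, ¬ (FiveTree.subtreeAt tree p).isSome → color p = 0

namespace ColoredFiveTree

/-- The sum of the colors of all vertices of a colored 5-ary tree. -/
def colorSum (T : ColoredFiveTree) : ℕ :=
  ((T.tree.vertices).map T.color).sum

/-- A colored 5-ary tree with `p` internal vertices has weight `n` iff its colors sum to
`n - 4p`; equivalently, its weight is `(sum of colors) + 4 · (number of internal vertices)`. -/
def weight (T : ColoredFiveTree) : ℕ :=
  T.colorSum + 4 * T.tree.internals

end ColoredFiveTree

/-!
Split a forest by its total number `p` of internal vertices; its weight is then `4p` plus its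
color sum `k`. Its `m` trees have `m + 5p` vertices in total, so one expects
`fussCatalan 5 m p * multichoose (m + 5p) k` such colored forests: uncolored shapes times
stars-and-bars colorings. Splitting off the root of the first tree (a leaf, or a node whose five
subtrees join the rest of the forest) proves this: the shapes obey the recurrence defining
`fussCatalan`, and the convolution over the root's color is absorbed by
`∑_{j ≤ k} multichoose N j = multichoose (N + 1) k`. Pascal's rule then solves the recurrence
as `(m / (5p + m)) C(5p + m, p)`.
-/

/-- The number of forests of `m` complete `d`-ary trees with `p` internal vertices in total:
the first tree is a leaf, or a root whose `d` subtrees join the remaining trees. -/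
def fussCatalan (d : ℕ) : ℕ → ℕ → ℕ
  | 0, 0 => 1
  | 0, _ + 1 => 0
  | m + 1, 0 => fussCatalan d m 0
  | m + 1, p + 1 => fussCatalan d m (p + 1) + fussCatalan d (m + d) p
termination_by m p => (p, m)

lemma fussCatalan_zero_right (d m : ℕ) : fussCatalan d m 0 = 1 := by
  induction m with
  | zero => rw [fussCatalan]
  | succ m ih => rw [fussCatalan, ih]

theorem fussCatalan_mul {d : ℕ} (hd : 0 < d) (m p : ℕ) :
    (d * p + m) * fussCatalan d m p = m * (d * p + m).choose p := by
  induction m, p using fussCatalan.induct d with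
  | case1 | case2 => simp [fussCatalan]
  | case3 m _ => simp [fussCatalan_zero_right]
  | case4 m p ih₁ ih₂ =>
    obtain ⟨N, hN⟩ : ∃ N, N = d * p + m + d := ⟨_, rfl⟩
    have hpascal := Nat.choose_succ_succ' N p
    have hratio := Nat.add_one_mul_choose_eq N p
    rw [show d * (p + 1) + m = N by rw [hN]; ring] at ih₁
    rw [show d * p + (m + d) = N by omega] at ih₂
    rw [fussCatalan, show d * (p + 1) + (m + 1) = N + 1 by rw [hN]; ring]
    apply Nat.eq_of_mul_eq_mul_left (show 0 < N by omega)
    have hN' : (N : ℤ) = d * p + m + d := by exact_mod_cast hN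
    zify at ih₁ ih₂ hpascal hratio ⊢
    linear_combination ((N : ℤ) + 1) * ih₁ + ((N : ℤ) + 1) * ih₂ + d * hratio
      - ((N : ℤ) + 1) * m * hpascal - ((N + 1).choose (p + 1) : ℤ) * hN'

lemma fussCatalan_eq_div {d m : ℕ} (hd : 0 < d) (hm : 0 < m) (p : ℕ) :
    (fussCatalan d m p : ℚ) = m / (d * p + m) * (d * p + m).choose p := by
  have hpos : (d * p + m : ℚ) ≠ 0 := by positivity
  rw [div_mul_eq_mul_div, eq_div_iff hpos, mul_comm]
  exact_mod_cast fussCatalan_mul hd m p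

lemma Nat.sum_range_multichoose_eq_multichoose_succ (N k : ℕ) :
    ∑ j ∈ Finset.range (k + 1), N.multichoose j = (N + 1).multichoose k := by
  induction k with
  | zero => simp
  | succ k ih => rw [Finset.sum_range_succ, ih, Nat.multichoose_succ_succ, add_comm]

def natProdAddEqEquivSigma {S : Type*} (Q : S → Prop) (g : S → ℕ) (k : ℕ) :
    {x : ℕ × S // Q x.2 ∧ x.1 + g x.2 = k} ≃ Σ j : Fin (k + 1), {s // Q s ∧ g s = j} where
  toFun x := ⟨⟨g x.1.2, by omega⟩, x.1.2, x.2.1, rfl⟩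
  invFun
    | ⟨j, s, hQ, hs⟩ => ⟨(k - j, s), hQ, by dsimp only; omega⟩
  left_inv
    | ⟨(c, s), hQ, hk⟩ => Subtype.ext (Prod.ext (by dsimp only at hk ⊢; omega) rfl)
  right_inv
    | ⟨j, s, hQ, hs⟩ => Sigma.subtype_ext (Fin.ext hs) rfl

namespace FiveTree

lemma subtreeAt_node_cons (t : Fin 5 → FiveTree) (i : Fin 5) (q : List (Fin 5)) :
    subtreeAt (node (t 0) (t 1) (t 2) (t 3) (t 4)) (i :: q) = subtreeAt (t i) q := by
  fin_cases i <;> rfl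

end FiveTree

namespace ColoredFiveTree

lemma ext {T U : ColoredFiveTree} (htree : T.tree = U.tree) (hcolor : T.color = U.color) :
    T = U := by
  cases T; cases U; simp_all

def leaf (c : ℕ) : ColoredFiveTree where
  tree := .leaf
  color
    | [] => c
    | _ :: _ => 0
  color_eq_zero
    | [], h => absurd rfl h
    | _ :: _, _ => rfl

def node (c : ℕ) (f : Fin 5 → ColoredFiveTree) : ColoredFiveTree where
  tree := .node (f 0).tree (f 1).tree (f 2).tree (f 3).tree (f 4).tree
  color
    | [] => c
    | i :: q => (f i).color q
  color_eq_zero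
    | [], h => absurd rfl h
    | i :: q, h =>
      (f i).color_eq_zero q (by rwa [FiveTree.subtreeAt_node_cons (fun j => (f j).tree)] at h)

@[simp] lemma internals_leaf (c : ℕ) : (leaf c).tree.internals = 0 := rfl

@[simp] lemma colorSum_leaf (c : ℕ) : (leaf c).colorSum = c := by
  simp [colorSum, leaf, FiveTree.vertices]

@[simp] lemma internals_node (c : ℕ) (f : Fin 5 → ColoredFiveTree) :
    (node c f).tree.internals = ∑ i, (f i).tree.internals + 1 := by
  simp [node, FiveTree.internals, Fin.sum_univ_five]

@[simp] lemma colorSum_node (c : ℕ) (f : Fin 5 → ColoredFiveTree) :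
    (node c f).colorSum = c + ∑ i, (f i).colorSum := by
  simp only [colorSum, node, FiveTree.vertices, List.map_cons, List.map_append, List.map_map,
    List.sum_cons, List.sum_append, Fin.sum_univ_five]
  rfl

lemma leaf_or_node (T : ColoredFiveTree) : (∃ c, T = leaf c) ∨ ∃ c f, T = node c f := by
  obtain ⟨t, color, hcolor⟩ := T
  cases t with
  | leaf =>
    refine .inl ⟨color [], ext rfl (funext fun q => ?_)⟩
    cases q with
    | nil => rfl
    | cons i q => exact hcolor _ (by simp [FiveTree.subtreeAt])
  | node a b c d e =>
    refine .inr ⟨color [],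
      fun i => ⟨![a, b, c, d, e] i, fun q => color (i :: q), fun q hq => ?_⟩,
      ext rfl (funext fun q => ?_)⟩
    · exact hcolor (i :: q) (by rwa [← FiveTree.subtreeAt_node_cons] at hq)
    · cases q <;> rfl

lemma leaf_injective : Function.Injective leaf :=
  fun _ _ h => congrFun (congrArg color h) []

lemma leaf_ne_node (c c' : ℕ) (f : Fin 5 → ColoredFiveTree) : leaf c ≠ node c' f :=
  fun h => FiveTree.noConfusion (congrArg tree h)

lemma node_inj {c c' : ℕ} {f f' : Fin 5 → ColoredFiveTree} :
    node c f = node c' f' ↔ c = c' ∧ f = f' := by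
  refine ⟨fun h => ?_, by rintro ⟨rfl, rfl⟩; rfl⟩
  have htree := congrArg tree h
  have hcolor := congrArg color h
  simp only [node, FiveTree.node.injEq] at htree
  refine ⟨congrFun hcolor [], funext fun i => ext ?_ (funext fun q => congrFun hcolor (i :: q))⟩
  fin_cases i <;> simp [htree]

section Forests

variable {m : ℕ}

def forestInternals (F : Fin m → ColoredFiveTree) : ℕ := ∑ i, (F i).tree.internals

def forestColorSum (F : Fin m → ColoredFiveTree) : ℕ := ∑ i, (F i).colorSum

def forests (m p k : ℕ) : Set (Fin m → ColoredFiveTree) :=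
  {F | forestInternals F = p ∧ forestColorSum F = k}

lemma sum_weight (F : Fin m → ColoredFiveTree) :
    ∑ i, (F i).weight = forestColorSum F + 4 * forestInternals F := by
  simp [weight, forestColorSum, forestInternals, Finset.sum_add_distrib, Finset.mul_sum]

def consRoot :
    ℕ × ((Fin m → ColoredFiveTree) ⊕ (Fin (m + 5) → ColoredFiveTree)) →
      Fin (m + 1) → ColoredFiveTree
  | (c, .inl F) => Fin.cons (leaf c) F
  | (c, .inr F) => Fin.cons (node c (F ∘ Fin.natAdd m)) (F ∘ Fin.castAdd 5)

lemma forestInternals_consRoot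
    (x : ℕ × ((Fin m → ColoredFiveTree) ⊕ (Fin (m + 5) → ColoredFiveTree))) :
    forestInternals (consRoot x) = x.2.elim forestInternals (forestInternals · + 1) := by
  obtain ⟨c, F | F⟩ := x <;>
    simp only [consRoot, forestInternals, Fin.sum_univ_succ (n := m), Fin.cons_zero,
      Fin.cons_succ, Sum.elim_inl, Sum.elim_inr]
  · simp
  · simp [Fin.sum_univ_add (a := m) (b := 5)]
    ring

lemma forestColorSum_consRoot
    (x : ℕ × ((Fin m → ColoredFiveTree) ⊕ (Fin (m + 5) → ColoredFiveTree))) :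
    forestColorSum (consRoot x) = x.1 + x.2.elim forestColorSum forestColorSum := by
  obtain ⟨c, F | F⟩ := x <;>
    simp only [consRoot, forestColorSum, Fin.sum_univ_succ (n := m), Fin.cons_zero,
      Fin.cons_succ, Sum.elim_inl, Sum.elim_inr]
  · simp
  · simp [Fin.sum_univ_add (a := m) (b := 5)]
    ring

lemma consRoot_injective : Function.Injective (consRoot (m := m)) := by
  rintro ⟨c, F | F⟩ ⟨c', F' | F'⟩ h <;>
    have hroot := congrFun h 0 <;> have htail := congrArg Fin.tail h <;>
    simp only [consRoot, Fin.cons_zero, Fin.tail_cons] at hroot htail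
  · rw [leaf_injective hroot, htail]
  · exact absurd hroot (leaf_ne_node _ _ _)
  · exact absurd hroot.symm (leaf_ne_node _ _ _)
  · obtain ⟨rfl, hchildren⟩ := node_inj.1 hroot
    have hF : F = F' := by
      rw [← Fin.append_castAdd_natAdd (f := F), ← Fin.append_castAdd_natAdd (f := F')]
      exact congrArg₂ Fin.append htail hchildren
    rw [hF]

lemma consRoot_surjective : Function.Surjective (consRoot (m := m)) := by
  intro F
  obtain ⟨c, hc⟩ | ⟨c, f, hcf⟩ := leaf_or_node (F 0)
  · exact ⟨(c, .inl (Fin.tail F)), by rw [consRoot, ← hc, Fin.cons_self_tail]⟩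
  · refine ⟨(c, .inr (Fin.append (Fin.tail F) f)), ?_⟩
    simp only [consRoot, Function.comp_def, Fin.append_left, Fin.append_right]
    rw [← hcf, Fin.cons_self_tail]

lemma consRoot_bijective : Function.Bijective (consRoot (m := m)) :=
  ⟨consRoot_injective, consRoot_surjective⟩

end Forests

lemma forests_zero_left (p k : ℕ) : forests 0 p k = {_F | p = 0 ∧ k = 0} := by
  simp [forests, forestInternals, forestColorSum, eq_comm]

noncomputable def forestsSuccEquiv (m p k : ℕ) :
    forests (m + 1) p k ≃ Σ j : Fin (k + 1), (forests m p j ⊕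
      {F : Fin (m + 5) → ColoredFiveTree //
        forestInternals F + 1 = p ∧ forestColorSum F = j}) :=
  ((Equiv.ofBijective _ consRoot_bijective).subtypeEquiv fun x => by
      rw [Equiv.ofBijective_apply, forests, Set.mem_ofPred_eq, forestInternals_consRoot,
        forestColorSum_consRoot, eq_comm (a := x.1 + _)]).symm.trans
    ((natProdAddEqEquivSigma (fun s => s.elim forestInternals (forestInternals · + 1) = p)
      (fun s => s.elim forestColorSum forestColorSum) k).trans
      (Equiv.sigmaCongrRight fun _ => Equiv.subtypeSum))

noncomputable def forestsSuccZeroEquiv (m k : ℕ) :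
    forests (m + 1) 0 k ≃ Σ j : Fin (k + 1), forests m 0 j :=
  (forestsSuccEquiv m 0 k).trans <| Equiv.sigmaCongrRight fun _ =>
    @Equiv.sumEmpty _ _ ⟨fun F => Nat.succ_ne_zero _ F.2.1⟩

noncomputable def forestsSuccSuccEquiv (m p k : ℕ) :
    forests (m + 1) (p + 1) k ≃
      Σ j : Fin (k + 1), (forests m (p + 1) j ⊕ forests (m + 5) p j) :=
  (forestsSuccEquiv m (p + 1) k).trans <| Equiv.sigmaCongrRight fun _ =>
    Equiv.sumCongr (Equiv.refl _) (Equiv.subtypeEquivRight fun _ => by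
      rw [forests, Set.mem_ofPred_eq, Nat.add_right_cancel_iff])

instance finite_forests (m p k : ℕ) : Finite (forests m p k) := by
  induction m, p using fussCatalan.induct 5 generalizing k with
  | case1 | case2 => infer_instance
  | case3 m ih => exact Finite.of_equiv _ (forestsSuccZeroEquiv m k).symm
  | case4 m p ih₁ ih₂ => exact Finite.of_equiv _ (forestsSuccSuccEquiv m p k).symm

theorem card_forests (m p k : ℕ) :
    Nat.card (forests m p k) = fussCatalan 5 m p * (m + 5 * p).multichoose k := by
  induction m, p using fussCatalan.induct 5 generalizing k with
  | case1 => cases k <;> simp [forests_zero_left, fussCatalan, Nat.multichoose_zero_succ]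
  | case2 => simp [forests_zero_left, fussCatalan]
  | case3 m ih =>
    rw [Nat.card_congr (forestsSuccZeroEquiv m k), Nat.card_sigma,
      Fin.sum_univ_eq_sum_range (fun j => Nat.card (forests m 0 j)), fussCatalan]
    simp only [ih, ← Finset.mul_sum, Nat.sum_range_multichoose_eq_multichoose_succ]
  | case4 m p ih₁ ih₂ =>
    rw [Nat.card_congr (forestsSuccSuccEquiv m p k), Nat.card_sigma,
      Fin.sum_univ_eq_sum_range (fun j => Nat.card (forests m (p + 1) j ⊕ forests (m + 5) p j)),
      fussCatalan, show m + 1 + 5 * (p + 1) = m + 5 * (p + 1) + 1 by ring]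
    simp only [Nat.card_sum, ih₁, ih₂, show m + 5 + 5 * p = m + 5 * (p + 1) by ring,
      ← add_mul, ← Finset.mul_sum, Nat.sum_range_multichoose_eq_multichoose_succ]

def weightEquiv (m n : ℕ) :
    {F : Fin m → ColoredFiveTree // ∑ i, (F i).weight = n} ≃
      Σ p : Fin (n / 4 + 1), forests m p (n - 4 * p) where
  toFun F := ⟨⟨forestInternals F.1, by have := sum_weight F.1; omega⟩, F.1, rfl,
    by have := sum_weight F.1; dsimp only; omega⟩
  invFun
    | ⟨p, F, hF⟩ => ⟨F, by have := p.isLt; rw [sum_weight, hF.1, hF.2]; omega⟩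
  left_inv _ := rfl
  right_inv
    | ⟨_, _, hF⟩ => Sigma.subtype_ext (Fin.ext hF.1) rfl

end ColoredFiveTree

/-- **Counting forests of colored 5-ary trees.** For all positive integers `m` and all
nonnegative integers `n`, the number of forests of `m` colored 5-ary trees of total
weight `n` equals `∑_{p=0}^{⌊n/4⌋} (m/(5p+m)) C(5p+m, p) C(n+p+m-1, n-4p)`. -/
theorem card_forests_colored_five_ary_trees (m : ℕ) (hm : 0 < m) (n : ℕ) :
    (Nat.card {F : Fin m → ColoredFiveTree // ∑ i, (F i).weight = n} : ℚ) =
      ∑ p ∈ Finset.range (n / 4 + 1),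
        (m : ℚ) / (5 * p + m) * ((5 * p + m).choose p) *
          ((n + p + m - 1).choose (n - 4 * p)) := by
  rw [Nat.card_congr (ColoredFiveTree.weightEquiv m n), Nat.card_sigma,
    Fin.sum_univ_eq_sum_range (fun p => Nat.card (ColoredFiveTree.forests m p (n - 4 * p))),
    Nat.cast_sum]
  refine Finset.sum_congr rfl fun p hp => ?_
  have h4p : 4 * p ≤ n := by have := Finset.mem_range.1 hp; omega
  rw [ColoredFiveTree.card_forests, Nat.multichoose_eq,
    show m + 5 * p + (n - 4 * p) - 1 = n + p + m - 1 by omega, Nat.cast_mul,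
    fussCatalan_eq_div (by norm_num) hm, Nat.cast_ofNat]
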